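/- arXiv:2101.07650 — 4 statements merged into one kernel-verified Lean document; each statement's English description precedes it below -/
import Mathlib

section
/- If A = (μ_A, λ_A) and B = (μ_B, λ_B) are intuitionistic fuzzy Lie ideals of an n-Lie algebra L, then their sum A + B, defined by μ_{A+B}(x) = sup_{x=a+b} min(μ_A(a), μ_B(b)) and λ_{A+B}(x) = inf_{x=a+b} max(λ_A(a), λ_B(b)), is an intuitionistic fuzzy Lie ideal of L. -/
open Function

/-- An `n`-Lie algebra structure (Filippov algebra) on a module `L` over a field `F`:
an `n`-linear bracket that is skew-symmetric and satisfies the Filippov identity. -/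
structure NLieAlgebra (F : Type*) [Field F] (n : ℕ) [NeZero n] (L : Type*)
    [AddCommGroup L] [Module F L] where
  bracket : MultilinearMap F (fun _ : Fin n => L) L
  skew : ∀ (σ : Equiv.Perm (Fin n)) (x : Fin n → L),
    bracket (x ∘ σ) = (Equiv.Perm.sign σ : ℤ) • bracket x
  filippov : ∀ (x y : Fin n → L),
    bracket (Function.update y 0 (bracket x)) =
      ∑ i : Fin n, bracket (Function.update x i (bracket (Function.update y 0 (x i))))

/-- `(μ, lam)` is an intuitionistic fuzzy set: both take values in `[0,1]` and `μ + lam ≤ 1`. -/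
def IsIFS {L : Type*} (μ lam : L → ℝ) : Prop :=
  ∀ x, 0 ≤ μ x ∧ μ x ≤ 1 ∧ 0 ≤ lam x ∧ lam x ≤ 1 ∧ μ x + lam x ≤ 1

/-- Intuitionistic fuzzy Lie subalgebra of an `n`-Lie algebra. -/
def IsIFSubalgebra {F : Type*} [Field F] {n : ℕ} [NeZero n] {L : Type*}
    [AddCommGroup L] [Module F L] (A : NLieAlgebra F n L) (μ lam : L → ℝ) : Prop :=
  IsIFS μ lam ∧
  (∀ x y : L, μ (x + y) ≥ min (μ x) (μ y)) ∧
  (∀ x y : L, lam (x + y) ≤ max (lam x) (lam y)) ∧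
  (∀ (α : F) (x : L), μ (α • x) ≥ μ x) ∧
  (∀ (α : F) (x : L), lam (α • x) ≤ lam x) ∧
  (∀ x : Fin n → L, μ (A.bracket x) ≥ ⨅ i, μ (x i)) ∧
  (∀ x : Fin n → L, lam (A.bracket x) ≤ ⨆ i, lam (x i))

/-- Intuitionistic fuzzy Lie ideal of an `n`-Lie algebra. -/
def IsIFIdeal {F : Type*} [Field F] {n : ℕ} [NeZero n] {L : Type*}
    [AddCommGroup L] [Module F L] (A : NLieAlgebra F n L) (μ lam : L → ℝ) : Prop :=
  IsIFS μ lam ∧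
  (∀ x y : L, μ (x + y) ≥ min (μ x) (μ y)) ∧
  (∀ x y : L, lam (x + y) ≤ max (lam x) (lam y)) ∧
  (∀ (α : F) (x : L), μ (α • x) ≥ μ x) ∧
  (∀ (α : F) (x : L), lam (α • x) ≤ lam x) ∧
  (∀ x : Fin n → L, μ (A.bracket x) ≥ ⨆ i, μ (x i)) ∧
  (∀ x : Fin n → L, lam (A.bracket x) ≤ ⨅ i, lam (x i))

/-- A (crisp) `n`-Lie subalgebra: a linear subspace closed under the bracket. -/
def IsNLieSubalgebra {F : Type*} [Field F] {n : ℕ} [NeZero n] {L : Type*}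
    [AddCommGroup L] [Module F L] (A : NLieAlgebra F n L) (S : Set L) : Prop :=
  (0 : L) ∈ S ∧ (∀ x y : L, x ∈ S → y ∈ S → x + y ∈ S) ∧
  (∀ (α : F) (x : L), x ∈ S → α • x ∈ S) ∧
  (∀ x : Fin n → L, (∀ i, x i ∈ S) → A.bracket x ∈ S)

/-- A (crisp) ideal of an `n`-Lie algebra: a linear subspace `I` such that
`[x_1, …, x_n] ∈ I` whenever some `x_i ∈ I`. -/
def IsNLieIdeal {F : Type*} [Field F] {n : ℕ} [NeZero n] {L : Type*}
    [AddCommGroup L] [Module F L] (A : NLieAlgebra F n L) (S : Set L) : Prop :=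
  (0 : L) ∈ S ∧ (∀ x y : L, x ∈ S → y ∈ S → x + y ∈ S) ∧
  (∀ (α : F) (x : L), x ∈ S → α • x ∈ S) ∧
  (∀ x : Fin n → L, (∃ i, x i ∈ S) → A.bracket x ∈ S)

/-!
Under `OrderDual.toDual` the nonmembership function `λ` of an intuitionistic fuzzy ideal becomes
a fuzzy ideal valued in `ℝᵒᵈ`, and the inf–max sum of nonmembership functions becomes the sup–min
sum there. So both halves of the theorem are instances of one fact, valid in any conditionally
complete linear order: the sup–min sum `x ↦ ⨆ a, min (μ a) (ν (x - a))` of two fuzzy ideals is a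
fuzzy ideal. For the bracket, multilinearity splits `[x₁, …, xₙ]` as `[x with xᵢ := a]` plus
`[x with xᵢ := xᵢ - a]`, and the ideal property bounds the degree of the first summand in `μ`
by `μ a` and that of the second in `ν` by `ν (xᵢ - a)`.
-/

open Set OrderDual

theorem min_ciSup_ciSup_le {α ι κ : Type*} [ConditionallyCompleteLinearOrder α] [Nonempty ι]
    [Nonempty κ] {f : ι → α} {g : κ → α} {c : α}
    (h : ∀ i j, min (f i) (g j) ≤ c) : min (⨆ i, f i) (⨆ j, g j) ≤ c := by
  by_contra! hc
  obtain ⟨i, hi⟩ := exists_lt_of_lt_ciSup (hc.trans_le (min_le_left _ _))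
  obtain ⟨j, hj⟩ := exists_lt_of_lt_ciSup (hc.trans_le (min_le_right _ _))
  exact (h i j).not_gt (lt_min hi hj)

theorem min_add_max_le {α : Type*} [AddCommGroup α] [LinearOrder α] [IsOrderedAddMonoid α]
    {a b c d e : α} (h₁ : a + c ≤ e) (h₂ : b + d ≤ e) : min a b + max c d ≤ e := by
  rw [add_max]
  exact max_le ((add_le_add_left (min_le_left a b) c).trans h₁)
    ((add_le_add_left (min_le_right a b) d).trans h₂)

section FuzzySum

variable {L β : Type*} [AddCommGroup L] [ConditionallyCompleteLinearOrder β]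

def fuzzySum (μ ν : L → β) (x : L) : β :=
  ⨆ a, min (μ a) (ν (x - a))

variable {μ ν μ' ν' : L → β}

theorem le_fuzzySum (hμ : BddAbove (range μ)) (x a : L) :
    min (μ a) (ν (x - a)) ≤ fuzzySum μ ν x := by
  obtain ⟨c, hc⟩ := hμ
  exact le_ciSup (f := fun a => min (μ a) (ν (x - a)))
    ⟨c, forall_mem_range.2 fun a => (min_le_left _ _).trans (hc (mem_range_self a))⟩ a

theorem fuzzySum_le_fuzzySum (hμ' : BddAbove (range μ')) {x y : L}
    (h : ∀ a, ∃ b, μ a ≤ μ' b ∧ ν (x - a) ≤ ν' (y - b)) :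
    fuzzySum μ ν x ≤ fuzzySum μ' ν' y :=
  ciSup_le fun a =>
    let ⟨b, hμb, hνb⟩ := h a
    (min_le_min hμb hνb).trans (le_fuzzySum hμ' y b)

theorem fuzzySum_mem_Icc {c d : β} (hμ : ∀ a, μ a ∈ Icc c d) (hν : ∀ a, ν a ∈ Icc c d) (x : L) :
    fuzzySum μ ν x ∈ Icc c d := by
  have hbdd : BddAbove (range μ) := ⟨d, forall_mem_range.2 fun a => (hμ a).2⟩
  refine ⟨?_, ciSup_le fun a => min_le_of_left_le (hμ a).2⟩
  simpa using (le_min (hμ 0).1 (hν (x - 0)).1).trans (le_fuzzySum hbdd x 0)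

end FuzzySum

structure IsFuzzyIdeal {R ι L β : Type*} [Semiring R] [AddCommGroup L] [Module R L]
    [ConditionallyCompleteLinearOrder β] (B : MultilinearMap R (fun _ : ι => L) L)
    (μ : L → β) : Prop where
  min_le_add : ∀ x y, min (μ x) (μ y) ≤ μ (x + y)
  le_smul : ∀ (r : R) x, μ x ≤ μ (r • x)
  iSup_le_bracket : ∀ x, ⨆ i, μ (x i) ≤ μ (B x)

namespace IsFuzzyIdeal

variable {R ι L β : Type*} [Semiring R] [AddCommGroup L] [Module R L]
  [ConditionallyCompleteLinearOrder β] [Finite ι]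
  {B : MultilinearMap R (fun _ : ι => L) L} {μ ν : L → β}

theorem le_bracket (h : IsFuzzyIdeal B μ) (x : ι → L) (i : ι) : μ (x i) ≤ μ (B x) :=
  have : Nonempty β := ⟨μ (x i)⟩
  (le_ciSup (Finite.bddAbove_range _) i).trans (h.iSup_le_bracket x)

theorem fuzzySum [Nonempty ι] (hμ : IsFuzzyIdeal B μ) (hν : IsFuzzyIdeal B ν)
    (hμ_bdd : BddAbove (range μ)) :
    IsFuzzyIdeal B (_root_.fuzzySum μ ν) where
  min_le_add x y := min_ciSup_ciSup_le fun a b => by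
    refine (le_min ?_ ?_).trans (le_fuzzySum hμ_bdd (x + y) (a + b))
    · exact (min_le_min (min_le_left _ _) (min_le_left _ _)).trans (hμ.min_le_add a b)
    · rw [add_sub_add_comm]
      exact (min_le_min (min_le_right _ _) (min_le_right _ _)).trans (hν.min_le_add _ _)
  le_smul r x := fuzzySum_le_fuzzySum hμ_bdd fun a =>
    ⟨r • a, hμ.le_smul r a, by rw [← smul_sub]; exact hν.le_smul r (x - a)⟩
  iSup_le_bracket x := by
    classical
    refine ciSup_le fun i => fuzzySum_le_fuzzySum hμ_bdd fun a => ⟨B (update x i a), ?_, ?_⟩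
    · simpa using hμ.le_bracket (update x i a) i
    · have hsplit : B x - B (update x i a) = B (update x i (x i - a)) := by
        rw [B.map_update_sub, update_eq_self]
      rw [hsplit]
      simpa using hν.le_bracket (update x i (x i - a)) i

end IsFuzzyIdeal

section Intuitionistic

variable {L : Type*} {μ lam : L → ℝ}

theorem IsIFS.mem_Icc (h : IsIFS μ lam) (x : L) : μ x ∈ Icc 0 1 :=
  ⟨(h x).1, (h x).2.1⟩

theorem IsIFS.toDual_mem_Icc (h : IsIFS μ lam) (x : L) :
    toDual (lam x) ∈ Icc (toDual 1) (toDual 0) :=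
  ⟨(h x).2.2.2.1, (h x).2.2.1⟩

theorem IsIFS.bddAbove_range (h : IsIFS μ lam) : BddAbove (range μ) :=
  ⟨1, forall_mem_range.2 fun x => (h.mem_Icc x).2⟩

theorem IsIFS.bddAbove_range_toDual (h : IsIFS μ lam) : BddAbove (range (toDual ∘ lam)) :=
  ⟨toDual 0, forall_mem_range.2 fun x => (h.toDual_mem_Icc x).2⟩

theorem IsIFS.fuzzySum [AddCommGroup L] {μ' lam' : L → ℝ} (h : IsIFS μ lam) (h' : IsIFS μ' lam') :
    IsIFS (_root_.fuzzySum μ μ') (ofDual ∘ _root_.fuzzySum (toDual ∘ lam) (toDual ∘ lam')) := by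
  intro x
  have hμ := fuzzySum_mem_Icc h.mem_Icc h'.mem_Icc x
  have hlam := fuzzySum_mem_Icc h.toDual_mem_Icc h'.toDual_mem_Icc x
  refine ⟨hμ.1, hμ.2, hlam.2, hlam.1, ?_⟩
  set g := ofDual (_root_.fuzzySum (toDual ∘ lam) (toDual ∘ lam') x)
  suffices _root_.fuzzySum μ μ' x ≤ 1 - g from le_sub_iff_add_le.1 this
  refine ciSup_le fun a => le_sub_iff_add_le.2 ?_
  have hg : g ≤ max (lam a) (lam' (x - a)) := le_fuzzySum h.bddAbove_range_toDual x a
  exact (add_le_add_right hg _).trans (min_add_max_le (h a).2.2.2.2 (h' (x - a)).2.2.2.2)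

theorem isIFIdeal_iff {F : Type*} [Field F] {n : ℕ} [NeZero n] [AddCommGroup L] [Module F L]
    {A : NLieAlgebra F n L} :
    IsIFIdeal A μ lam ↔
      IsIFS μ lam ∧ IsFuzzyIdeal A.bracket μ ∧ IsFuzzyIdeal A.bracket (toDual ∘ lam) :=
  ⟨fun ⟨h, hμ_add, hlam_add, hμ_smul, hlam_smul, hμ_br, hlam_br⟩ =>
    ⟨h, ⟨hμ_add, hμ_smul, hμ_br⟩, ⟨hlam_add, hlam_smul, hlam_br⟩⟩,
   fun ⟨h, ⟨hμ_add, hμ_smul, hμ_br⟩, ⟨hlam_add, hlam_smul, hlam_br⟩⟩ =>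
    ⟨h, hμ_add, hlam_add, hμ_smul, hlam_smul, hμ_br, hlam_br⟩⟩

end Intuitionistic

theorem stmt10_general {F : Type*} [Field F] {n : ℕ} [NeZero n]
    {L : Type*} [AddCommGroup L] [Module F L] (A : NLieAlgebra F n L)
    (μA lamA μB lamB : L → ℝ)
    (hA : IsIFIdeal A μA lamA) (hB : IsIFIdeal A μB lamB) :
    IsIFIdeal A (fun x => ⨆ a : L, min (μA a) (μB (x - a)))
                (fun x => ⨅ a : L, max (lamA a) (lamB (x - a))) := by
  obtain ⟨hA, hAμ, hAlam⟩ := isIFIdeal_iff.1 hA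
  obtain ⟨hB, hBμ, hBlam⟩ := isIFIdeal_iff.1 hB
  -- the goal's functions unfold to `fuzzySum μA μB` and
  -- `ofDual ∘ fuzzySum (toDual ∘ lamA) (toDual ∘ lamB)`
  exact isIFIdeal_iff.2
    ⟨hA.fuzzySum hB, hAμ.fuzzySum hBμ hA.bddAbove_range,
      hAlam.fuzzySum hBlam hA.bddAbove_range_toDual⟩

theorem stmt10 {F : Type*} [Field F] {n : ℕ} [NeZero n] (hn : 2 ≤ n)
    {L : Type*} [AddCommGroup L] [Module F L] (A : NLieAlgebra F n L)
    (μA lamA μB lamB : L → ℝ)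
    (hA : IsIFIdeal A μA lamA) (hB : IsIFIdeal A μB lamB) :
    IsIFIdeal A (fun x => ⨆ a : L, min (μA a) (μB (x - a)))
                (fun x => ⨅ a : L, max (lamA a) (lamB (x - a))) :=
  stmt10_general A μA lamA μB lamB hA hB
end

section
/- Let A = (μ_A, λ_A) be an intuitionistic fuzzy Lie ideal of an n-Lie algebra L and x, y ∈ L. Then the cosets x + A and y + A are equal (i.e., μ_A(z - x) = μ_A(z - y) and λ_A(z - x) = λ_A(z - y) for all z ∈ L) if and only if μ_A(x - y) = μ_A(0) and λ_A(x - y) = λ_A(0). -/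
open Function

lemma neg_mu {F : Type*} [Field F] {L : Type*} [AddCommGroup L] [Module F L]
    (μ : L → ℝ) (hs : ∀ (α : F) (x : L), μ (α • x) ≥ μ x) (x : L) : μ (-x) = μ x := by
  have h1 := hs (-1) x
  have h2 := hs (-1) (-x)
  simp at h1 h2
  linarith

lemma neg_lam {F : Type*} [Field F] {L : Type*} [AddCommGroup L] [Module F L]
    (lam : L → ℝ) (hs : ∀ (α : F) (x : L), lam (α • x) ≤ lam x) (x : L) : lam (-x) = lam x := by
  have h1 := hs (-1) x
  have h2 := hs (-1) (-x)
  simp at h1 h2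
  linarith

theorem stmt16 {F : Type*} [Field F] {n : ℕ} [NeZero n] (hn : 2 ≤ n)
    {L : Type*} [AddCommGroup L] [Module F L] (A : NLieAlgebra F n L)
    (μ lam : L → ℝ) (h : IsIFIdeal A μ lam) (x y : L) :
    ((∀ z : L, μ (z - x) = μ (z - y)) ∧ (∀ z : L, lam (z - x) = lam (z - y))) ↔
      (μ (x - y) = μ 0 ∧ lam (x - y) = lam 0) := by
  obtain ⟨_, hadd, ladd, hsm, lsm, _, _⟩ := h
  have hmu0 : ∀ w : L, μ w ≤ μ 0 := by
    intro w
    have := hadd w (-w)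
    have hn := neg_mu (F := F) μ hsm w
    simpa [hn] using this
  have hlam0 : ∀ w : L, lam 0 ≤ lam w := by
    intro w
    have := ladd w (-w)
    have hn := neg_lam (F := F) lam lsm w
    simpa [hn] using this
  constructor
  · rintro ⟨h1, h2⟩
    have e1 := h1 x
    have e2 := h2 x
    simp at e1 e2
    exact ⟨e1.symm, e2.symm⟩
  · rintro ⟨h1, h2⟩
    have hyx : μ (y - x) = μ 0 := by
      rw [show y - x = -(x - y) by abel, neg_mu (F := F) μ hsm, h1]
    have lyx : lam (y - x) = lam 0 := by
      rw [show y - x = -(x - y) by abel, neg_lam (F := F) lam lsm, h2]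
    constructor
    · intro z
      have a1 : μ (z - x) ≥ min (μ (z - y)) (μ (y - x)) := by
        have := hadd (z - y) (y - x); simpa [show z - y + (y - x) = z - x by abel] using this
      have a2 : μ (z - y) ≥ min (μ (z - x)) (μ (x - y)) := by
        have := hadd (z - x) (x - y); simpa [show z - x + (x - y) = z - y by abel] using this
      rw [hyx, min_eq_left (hmu0 _)] at a1
      rw [h1, min_eq_left (hmu0 _)] at a2
      linarith
    · intro z
      have a1 : lam (z - x) ≤ max (lam (z - y)) (lam (y - x)) := by
        have := ladd (z - y) (y - x); simpa [show z - y + (y - x) = z - x by abel] using this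
      have a2 : lam (z - y) ≤ max (lam (z - x)) (lam (x - y)) := by
        have := ladd (z - x) (x - y); simpa [show z - x + (x - y) = z - y by abel] using this
      rw [lyx, max_eq_left (hlam0 _)] at a1
      rw [h2, max_eq_left (hlam0 _)] at a2
      linarith
end

section
/- Let A = (μ_A, λ_A) be an intuitionistic fuzzy Lie ideal of an n-Lie algebra L. The relation on L defined by x ∼ y iff μ_A(x - y) = μ_A(0) and λ_A(x - y) = λ_A(0) is an equivalence relation compatible with addition, scalar multiplication, and the n-ary bracket; i.e., if x_i ∼ y_i for i = 1,...,n, then x_1 + x_2 ∼ y_1 + y_2, αx_1 ∼ αy_1, and [x_1,...,x_n] ∼ [y_1,...,y_n]. -/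
open Function

theorem stmt17 {F : Type*} [Field F] {n : ℕ} [NeZero n] (hn : 2 ≤ n)
    {L : Type*} [AddCommGroup L] [Module F L] (A : NLieAlgebra F n L)
    (μ lam : L → ℝ) (h : IsIFIdeal A μ lam) :
    Equivalence (fun x y : L => μ (x - y) = μ 0 ∧ lam (x - y) = lam 0) ∧
    (∀ x₁ y₁ x₂ y₂ : L,
      (μ (x₁ - y₁) = μ 0 ∧ lam (x₁ - y₁) = lam 0) →
      (μ (x₂ - y₂) = μ 0 ∧ lam (x₂ - y₂) = lam 0) →
      (μ ((x₁ + x₂) - (y₁ + y₂)) = μ 0 ∧ lam ((x₁ + x₂) - (y₁ + y₂)) = lam 0)) ∧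
    (∀ (α : F) (x y : L),
      (μ (x - y) = μ 0 ∧ lam (x - y) = lam 0) →
      (μ (α • x - α • y) = μ 0 ∧ lam (α • x - α • y) = lam 0)) ∧
    (∀ x y : Fin n → L,
      (∀ i, μ (x i - y i) = μ 0 ∧ lam (x i - y i) = lam 0) →
      (μ (A.bracket x - A.bracket y) = μ 0 ∧
       lam (A.bracket x - A.bracket y) = lam 0)) := by
  obtain ⟨hifs, hadd, hladd, hsmul, hlsmul, hbr, hlbr⟩ := h
  have hmu0 : ∀ z : L, μ z ≤ μ 0 := fun z => by
    have := hsmul 0 z; simpa using this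
  have hl0 : ∀ z : L, lam 0 ≤ lam z := fun z => by
    have := hlsmul 0 z; simpa using this
  have hneg : ∀ z : L, μ (-z) = μ z ∧ lam (-z) = lam z := by
    intro z
    have h1 := hsmul (-1 : F) z
    have h2 := hsmul (-1 : F) (-z)
    have h3 := hlsmul (-1 : F) z
    have h4 := hlsmul (-1 : F) (-z)
    simp only [neg_one_smul, neg_neg] at h1 h2 h3 h4
    constructor <;> linarith
  -- closure of the "maximal value" set under addition
  have mem_add : ∀ a b : L, (μ a = μ 0 ∧ lam a = lam 0) → (μ b = μ 0 ∧ lam b = lam 0) →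
      (μ (a + b) = μ 0 ∧ lam (a + b) = lam 0) := by
    intro a b ⟨ha1, ha2⟩ ⟨hb1, hb2⟩
    constructor
    · refine le_antisymm (hmu0 _) ?_
      have := hadd a b
      rw [ha1, hb1, min_self] at this
      exact this
    · refine le_antisymm ?_ (hl0 _)
      have := hladd a b
      rw [ha2, hb2, max_self] at this
      exact this
  refine ⟨⟨?_, ?_, ?_⟩, ?_, ?_, ?_⟩
  · intro x; simp
  · intro x y ⟨h1, h2⟩
    have : y - x = -(x - y) := by abel
    rw [this, (hneg _).1, (hneg _).2]
    exact ⟨h1, h2⟩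
  · intro x y z hxy hyz
    have : x - z = (x - y) + (y - z) := by abel
    rw [this]
    exact mem_add _ _ hxy hyz
  · intro x₁ y₁ x₂ y₂ h1 h2
    have : (x₁ + x₂) - (y₁ + y₂) = (x₁ - y₁) + (x₂ - y₂) := by abel
    rw [this]
    exact mem_add _ _ h1 h2
  · intro α x y ⟨h1, h2⟩
    rw [show α • x - α • y = α • (x - y) from (smul_sub α x y).symm]
    constructor
    · exact le_antisymm (hmu0 _) (h1 ▸ hsmul α (x - y))
    · exact le_antisymm (h2 ▸ hlsmul α (x - y)) (hl0 _)
  · intro x y hxy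
    -- the set of elements with maximal μ and minimal lam contains any bracket
    -- with one entry of the form x i - y i
    have hbrmem : ∀ (m : Fin n → L) (i : Fin n),
        μ (A.bracket (Function.update m i (x i - y i))) = μ 0 ∧
        lam (A.bracket (Function.update m i (x i - y i))) = lam 0 := by
      intro m i
      constructor
      · refine le_antisymm (hmu0 _) ?_
        refine le_trans ?_ (hbr (Function.update m i (x i - y i)))
        have : μ (Function.update m i (x i - y i) i) ≤
            ⨆ j, μ (Function.update m i (x i - y i) j) :=
          le_ciSup (f := fun j => μ (Function.update m i (x i - y i) j))
            (Set.Finite.bddAbove (Set.finite_range _)) i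
        rw [Function.update_self] at this
        rw [← (hxy i).1]
        exact this
      · refine le_antisymm ?_ (hl0 _)
        refine le_trans (hlbr (Function.update m i (x i - y i))) ?_
        have : (⨅ j, lam (Function.update m i (x i - y i) j)) ≤
            lam (Function.update m i (x i - y i) i) :=
          ciInf_le (f := fun j => lam (Function.update m i (x i - y i) j))
            (Set.Finite.bddBelow (Set.finite_range _)) i
        rw [Function.update_self] at this
        rw [(hxy i).2] at this
        exact this
    set z : ℕ → (Fin n → L) := fun k j => if (j : ℕ) < k then y j else x j with hz
    have key : ∀ k : ℕ, k ≤ n →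
        μ (A.bracket x - A.bracket (z k)) = μ 0 ∧
        lam (A.bracket x - A.bracket (z k)) = lam 0 := by
      intro k hk
      induction k with
      | zero =>
        have : z 0 = x := by funext j; simp [hz]
        rw [this]
        simp
      | succ k ih =>
        have hkn : k < n := lt_of_lt_of_le (Nat.lt_succ_self k) hk
        have ihk := ih (le_of_lt hkn)
        set i : Fin n := ⟨k, hkn⟩ with hi
        have e1 : z k = Function.update (z k) i (x i) := by
          funext j
          rcases eq_or_ne j i with rfl | hj
          · simp [hz, hi]
          · rw [Function.update_of_ne hj]
        have e2 : z (k + 1) = Function.update (z k) i (y i) := by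
          funext j
          rcases eq_or_ne j i with rfl | hj
          · simp [hz, hi]
          · rw [Function.update_of_ne hj]
            have hjk : (j : ℕ) ≠ k := fun hc => hj (Fin.ext hc)
            simp only [hz]
            have : (j : ℕ) < k + 1 ↔ (j : ℕ) < k :=
              ⟨fun hlt => lt_of_le_of_ne (Nat.lt_succ_iff.mp hlt) hjk, fun hlt => Nat.lt_succ_of_lt hlt⟩
            rw [if_congr this rfl rfl]
        have hdiff : A.bracket (z k) - A.bracket (z (k + 1)) =
            A.bracket (Function.update (z k) i (x i - y i)) := by
          rw [A.bracket.map_update_sub (z k) i (x i) (y i), ← e1, ← e2]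
        have hstep : A.bracket x - A.bracket (z (k + 1)) =
            (A.bracket x - A.bracket (z k)) + (A.bracket (z k) - A.bracket (z (k + 1))) := by
          abel
        rw [hstep, hdiff]
        exact mem_add _ _ ihk (hbrmem (z k) i)
    have hzn : z n = y := by
      funext j
      simp [hz, j.isLt]
    have := key n le_rfl
    rw [hzn] at this
    exact this
end

section
/- Let A = (μ_A, λ_A) be an intuitionistic fuzzy Lie ideal of an n-Lie algebra L. Then the set L/A of cosets x + A, with operations (x+A) + (y+A) = (x+y) + A, α(x+A) = αx + A, and [(x_1+A),...,(x_n+A)] = [x_1,...,x_n] + A, is a well-defined n-Lie algebra. -/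
open Function

/-- The coset `x + A` of an intuitionistic fuzzy ideal `A = (μ, lam)`, as the pair of
functions `z ↦ (μ(z - x), lam(z - x))`. -/
def coset {L : Type*} [AddCommGroup L] (μ lam : L → ℝ) (x : L) : L → ℝ × ℝ :=
  fun z => (μ (z - x), lam (z - x))


/-! Two cosets `x + A` and `y + A` coincide exactly when `x - y` lies in the crisp kernel
`K = {t | μ t = μ 0 ∧ lam t = lam 0}`, which is an ideal of `L`: the scalar axioms with `α = 0`
make `μ` maximal and `lam` minimal at `0`. So `L/A` is in bijection with the quotient module
`L ⧸ K`, whose structure is transported to `L/A`. The bracket descends because, by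
multilinearity, `[x₁, …, xₙ] - [y₁, …, yₙ]` expands into brackets each having an argument
`xᵢ - yᵢ ∈ K`. -/

theorem MultilinearMap.map_sub_map_mem {R ι M N : Type*} [Ring R] [Fintype ι]
    [AddCommGroup M] [Module R M] [AddCommGroup N] [Module R N]
    (f : MultilinearMap R (fun _ : ι => M) N) {I : Submodule R M} {J : Submodule R N}
    (hf : ∀ x, (∃ i, x i ∈ I) → f x ∈ J) {x y : ι → M} (hxy : ∀ i, x i - y i ∈ I) :
    f x - f y ∈ J := by
  classical
  have hexpand : f x = ∑ s : Finset ι, f (s.piecewise (x - y) y) := by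
    simpa using f.map_add_univ (x - y) y
  rw [hexpand, ← Finset.sum_erase_add _ _ (Finset.mem_univ ∅), Finset.piecewise_empty,
    add_sub_cancel_right]
  refine J.sum_mem fun s hs => hf _ ?_
  obtain ⟨i, hi⟩ := Finset.nonempty_iff_ne_empty.2 (Finset.ne_of_mem_erase hs)
  exact ⟨i, by simpa [s.piecewise_eq_of_mem _ _ hi] using hxy i⟩

namespace NLieAlgebra

variable {F : Type*} [Field F] {n : ℕ} [NeZero n] {L M : Type*}
  [AddCommGroup L] [Module F L] [AddCommGroup M] [Module F M]
  (A : NLieAlgebra F n L) {π : L →ₗ[F] M}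

theorem map_bracket_eq_of_comp_eq (hker : IsNLieIdeal A (LinearMap.ker π))
    {x y : Fin n → L} (hxy : π ∘ x = π ∘ y) : π (A.bracket x) = π (A.bracket y) := by
  rw [← sub_eq_zero, ← map_sub, ← LinearMap.mem_ker]
  refine A.bracket.map_sub_map_mem hker.2.2.2 fun i => ?_
  rw [LinearMap.mem_ker, map_sub, sub_eq_zero]
  exact congrFun hxy i

noncomputable def liftBracket (hπ : Surjective π) (v : Fin n → M) : M :=
  π (A.bracket (surjInv hπ ∘ v))

variable {A}

theorem liftBracket_comp (hπ : Surjective π) (hker : IsNLieIdeal A (LinearMap.ker π))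
    (x : Fin n → L) : A.liftBracket hπ (π ∘ x) = π (A.bracket x) :=
  A.map_bracket_eq_of_comp_eq hker (by ext i; exact surjInv_eq hπ _)

variable (A)

noncomputable def ofSurjective (hπ : Surjective π) (hker : IsNLieIdeal A (LinearMap.ker π)) :
    NLieAlgebra F n M where
  bracket :=
    { toFun := A.liftBracket hπ
      map_update_add' := by
        intro _ v i a b
        obtain ⟨x, rfl⟩ := hπ.comp_left v
        obtain ⟨a, rfl⟩ := hπ a
        obtain ⟨b, rfl⟩ := hπ b
        simp only [← map_add, ← comp_update, liftBracket_comp hπ hker, A.bracket.map_update_add]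
      map_update_smul' := by
        intro _ v i c a
        obtain ⟨x, rfl⟩ := hπ.comp_left v
        obtain ⟨a, rfl⟩ := hπ a
        simp only [← map_smul, ← comp_update, liftBracket_comp hπ hker,
          A.bracket.map_update_smul] }
  skew σ v := by
    obtain ⟨x, rfl⟩ := hπ.comp_left v
    simp only [MultilinearMap.coe_mk, comp_assoc, liftBracket_comp hπ hker, A.skew, map_zsmul]
  filippov v w := by
    obtain ⟨x, rfl⟩ := hπ.comp_left v
    obtain ⟨y, rfl⟩ := hπ.comp_left w
    simp only [MultilinearMap.coe_mk, liftBracket_comp hπ hker, comp_apply, ← comp_update,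
      A.filippov, map_sum]

theorem ofSurjective_bracket_comp (hπ : Surjective π) (hker : IsNLieIdeal A (LinearMap.ker π))
    (x : Fin n → L) : (A.ofSurjective hπ hker).bracket (π ∘ x) = π (A.bracket x) :=
  liftBracket_comp hπ hker x

end NLieAlgebra

theorem Submodule.exists_linearMap_eq_of_fibers {R L X : Type*} [Ring R] [AddCommGroup L]
    [Module R L] (K : Submodule R L) (f : L → X) (hf : Surjective f)
    (hfib : ∀ x y, f x = f y ↔ x - y ∈ K) :
    ∃ (g : AddCommGroup X), letI := g
      ∃ (m : Module R X), letI := m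
        ∃ π : L →ₗ[R] X, ⇑π = f ∧ LinearMap.ker π = K := by
  let e : X ≃ L ⧸ K := (Setoid.quotientKerEquivOfSurjective f hf).symm.trans
    (Quotient.congrRight fun x y => (hfib x y).trans K.quotientRel_def.symm)
  let _ := e.addCommGroup
  let _ := e.module R
  refine ⟨_, _, (e.linearEquiv R).symm.toLinearMap ∘ₗ K.mkQ, ?_, ?_⟩
  · rfl
  · rw [LinearEquiv.ker_comp, K.ker_mkQ]

namespace IsIFIdeal

variable {F : Type*} [Field F] {n : ℕ} [NeZero n] {L : Type*} [AddCommGroup L] [Module F L]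
  {A : NLieAlgebra F n L} {μ lam : L → ℝ}

theorem apply_le_apply_zero (h : IsIFIdeal A μ lam) (t : L) : μ t ≤ μ 0 := by
  simpa using h.2.2.2.1 0 t

theorem apply_zero_le_apply (h : IsIFIdeal A μ lam) (t : L) : lam 0 ≤ lam t := by
  simpa using h.2.2.2.2.1 0 t

def kernel (h : IsIFIdeal A μ lam) : Submodule F L where
  carrier := {t | μ t = μ 0 ∧ lam t = lam 0}
  zero_mem' := ⟨rfl, rfl⟩
  add_mem' {a b} ha hb :=
    ⟨(h.apply_le_apply_zero _).antisymm (by simpa [ha.1, hb.1] using h.2.1 a b),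
      (by simpa [ha.2, hb.2] using h.2.2.1 a b : _ ≤ _).antisymm (h.apply_zero_le_apply _)⟩
  smul_mem' α a ha :=
    ⟨(h.apply_le_apply_zero _).antisymm (ha.1 ▸ h.2.2.2.1 α a),
      (ha.2 ▸ h.2.2.2.2.1 α a).antisymm (h.apply_zero_le_apply _)⟩

theorem isNLieIdeal_kernel (h : IsIFIdeal A μ lam) : IsNLieIdeal A h.kernel := by
  refine ⟨h.kernel.zero_mem, fun _ _ => h.kernel.add_mem, fun α _ => h.kernel.smul_mem α, ?_⟩
  rintro x ⟨j, hj⟩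
  have hbdd : BddAbove (Set.range fun i => μ (x i)) := (Set.finite_range _).bddAbove
  have hbdd' : BddBelow (Set.range fun i => lam (x i)) := (Set.finite_range _).bddBelow
  refine ⟨(h.apply_le_apply_zero _).antisymm ?_, le_antisymm ?_ (h.apply_zero_le_apply _)⟩
  · exact hj.1 ▸ (le_ciSup hbdd j).trans (h.2.2.2.2.2.1 x)
  · exact hj.2 ▸ (h.2.2.2.2.2.2 x).trans (ciInf_le hbdd' j)

theorem apply_add_of_mem_kernel (h : IsIFIdeal A μ lam) (s : L) {t : L} (ht : t ∈ h.kernel) :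
    μ (s + t) = μ s ∧ lam (s + t) = lam s := by
  have hμ : ∀ s t, t ∈ h.kernel → μ s ≤ μ (s + t) := fun s t ht => by
    simpa [ht.1, min_eq_left (h.apply_le_apply_zero s)] using h.2.1 s t
  have hlam : ∀ s t, t ∈ h.kernel → lam (s + t) ≤ lam s := fun s t ht => by
    simpa [ht.2, max_eq_left (h.apply_zero_le_apply s)] using h.2.2.1 s t
  have ht' := h.kernel.neg_mem ht
  constructor
  · exact (hμ s t ht).antisymm' (by simpa using hμ (s + t) (-t) ht')
  · exact (hlam s t ht).antisymm (by simpa using hlam (s + t) (-t) ht')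

theorem coset_eq_coset_iff (h : IsIFIdeal A μ lam) {x y : L} :
    coset μ lam x = coset μ lam y ↔ x - y ∈ h.kernel := by
  refine ⟨fun hxy => ?_, fun hxy => funext fun z => ?_⟩
  · have := congrFun hxy x
    simp only [coset, sub_self, Prod.mk.injEq] at this
    exact ⟨this.1.symm, this.2.symm⟩
  · have hz : z - x = z - y + (y - x) := by abel
    have := h.apply_add_of_mem_kernel (z - y) (h.kernel.neg_mem hxy)
    rw [neg_sub, ← hz] at this
    simp only [coset, this]

end IsIFIdeal

theorem stmt18_general {F : Type*} [Field F] {n : ℕ} [NeZero n]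
    {L : Type*} [AddCommGroup L] [Module F L] (A : NLieAlgebra F n L)
    (μ lam : L → ℝ) (h : IsIFIdeal A μ lam) :
    ∃ (g : AddCommGroup (Set.range (coset μ lam))),
      letI := g
      ∃ (m : Module F (Set.range (coset μ lam))),
        letI := m
        ∃ (B : NLieAlgebra F n (Set.range (coset μ lam))),
          (∀ x y : L, (⟨coset μ lam (x + y), x + y, rfl⟩ : Set.range (coset μ lam)) =
              (⟨coset μ lam x, x, rfl⟩ : Set.range (coset μ lam)) + ⟨coset μ lam y, y, rfl⟩) ∧
          (∀ (α : F) (x : L),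
            (⟨coset μ lam (α • x), α • x, rfl⟩ : Set.range (coset μ lam)) =
              α • (⟨coset μ lam x, x, rfl⟩ : Set.range (coset μ lam))) ∧
          (∀ x : Fin n → L,
            B.bracket (fun i => (⟨coset μ lam (x i), x i, rfl⟩ : Set.range (coset μ lam))) =
              ⟨coset μ lam (A.bracket x), A.bracket x, rfl⟩) := by
  obtain ⟨g, m, π, hπ, hker⟩ := h.kernel.exists_linearMap_eq_of_fibers
    (Set.rangeFactorization (coset μ lam)) Set.rangeFactorization_surjective
    (fun _ _ => Subtype.ext_iff.trans h.coset_eq_coset_iff)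
  have hπx (x : L) : π x = ⟨coset μ lam x, x, rfl⟩ := congrFun hπ x
  have hsurj : Surjective π := hπ ▸ Set.rangeFactorization_surjective
  refine ⟨g, m, A.ofSurjective hsurj (hker ▸ h.isNLieIdeal_kernel), fun x y => ?_,
    fun α x => ?_, fun x => ?_⟩
  · simp only [← hπx, map_add]
  · simp only [← hπx, map_smul]
  · simpa only [← hπx, Function.comp_def] using A.ofSurjective_bracket_comp hsurj _ x

theorem stmt18 {F : Type*} [Field F] {n : ℕ} [NeZero n] (hn : 2 ≤ n)
    {L : Type*} [AddCommGroup L] [Module F L] (A : NLieAlgebra F n L)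
    (μ lam : L → ℝ) (h : IsIFIdeal A μ lam) :
    ∃ (g : AddCommGroup (Set.range (coset μ lam))),
      letI := g
      ∃ (m : Module F (Set.range (coset μ lam))),
        letI := m
        ∃ (B : NLieAlgebra F n (Set.range (coset μ lam))),
          (∀ x y : L, (⟨coset μ lam (x + y), x + y, rfl⟩ : Set.range (coset μ lam)) =
              (⟨coset μ lam x, x, rfl⟩ : Set.range (coset μ lam)) + ⟨coset μ lam y, y, rfl⟩) ∧
          (∀ (α : F) (x : L),
            (⟨coset μ lam (α • x), α • x, rfl⟩ : Set.range (coset μ lam)) =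
              α • (⟨coset μ lam x, x, rfl⟩ : Set.range (coset μ lam))) ∧
          (∀ x : Fin n → L,
            B.bracket (fun i => (⟨coset μ lam (x i), x i, rfl⟩ : Set.range (coset μ lam))) =
              ⟨coset μ lam (A.bracket x), A.bracket x, rfl⟩) :=
  stmt18_general A μ lam h
end
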